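/- arXiv:1910.06184 — 8 statements merged into one kernel-verified Lean document; each statement's English description precedes it below -/
import Mathlib

section
/- The ring A_β = F⟨θ⟩/(θ^m − β), where F⟨θ⟩ is the twisted polynomial ring with relation θa = ζ(a)θ for a ∈ F, has center equal to the k-subalgebra k[θ^n] generated by θ^n. -/
/-- Let `k` be a field, `F/k` a finite separable extension with an
automorphism `ζ` of order `n` whose fixed field is `k`, `m` a multiple of `n` with `m/n`
invertible in `k`, and `β ∈ k^×`.  Let `A = A_β` be the twisted polynomial quotient ring
`F⟨θ⟩/(θ^m - β)`, presented here as a `k`-algebra `A` with an embedding `ι : F → A` and an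
element `θ` satisfying `θ·ι(a) = ι(ζ a)·θ`, `θ^m = β`, such that `θ^0, …, θ^{m-1}` form an
`F`-basis of `A`.  Then the center of `A` equals the `k`-subalgebra generated by `θ^n`. -/
theorem center_of_twisted_polynomial_quotient
    {k F A : Type*} [Field k] [Field F] [Algebra k F]
    [FiniteDimensional k F] [Algebra.IsSeparable k F]
    (ζ : F ≃ₐ[k] F) (n m : ℕ) (hn : 0 < n) (hord : orderOf ζ = n)
    (hfix : ∀ x : F, ζ x = x ↔ x ∈ (algebraMap k F).range)
    (hnm : n ∣ m) (hmn : IsUnit ((m / n : ℕ) : k))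
    (β : k) (hβ : β ≠ 0)
    [Ring A] [Algebra k A] (ι : F →ₐ[k] A) (θ : A)
    (hθa : ∀ a : F, θ * ι a = ι (ζ a) * θ)
    (hθm : θ ^ m = algebraMap k A β)
    (hbasis : ∀ x : A, ∃! c : Fin m → F, x = ∑ i : Fin m, ι (c i) * θ ^ (i : ℕ)) :
    Subalgebra.center k A = Algebra.adjoin k {θ ^ n} := by
  classical
  rcases Nat.eq_zero_or_pos m with hm | hm0
  · subst hm
    have hA : ∀ x : A, x = 0 := fun x => by
      obtain ⟨c, hc, -⟩ := hbasis x
      simpa using hc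
    ext x
    rw [hA x]
    exact iff_of_true (zero_mem _) (zero_mem _)
  set b : F := algebraMap k F β with hbdef
  have hb : b ≠ 0 := by
    simp only [hbdef, ne_eq, map_eq_zero]
    exact hβ
  have hιb : ι b = algebraMap k A β := ι.commutes β
  have hpow : ∀ (j : ℕ) (a : F), θ ^ j * ι a = ι ((ζ ^ j) a) * θ ^ j := by
    intro j
    induction j with
    | zero => intro a; simp
    | succ j ih =>
      intro a
      rw [pow_succ, mul_assoc, hθa, ← mul_assoc, ih, mul_assoc, ← pow_succ]
      simp [pow_succ]
  have hζn : ζ ^ n = 1 := by rw [← hord]; exact pow_orderOf_eq_one ζ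
  have hθnc : θ ^ n ∈ Subalgebra.center k A := by
    rw [Subalgebra.mem_center_iff]
    intro y
    obtain ⟨c, hc, -⟩ := hbasis y
    rw [hc, Finset.sum_mul, Finset.mul_sum]
    refine Finset.sum_congr rfl fun i _ => ?_
    rw [mul_assoc, pow_mul_comm, ← mul_assoc, ← mul_assoc, hpow n, hζn]
    rfl
  -- ℕ-indexed sums
  have hFinN : ∀ g : ℕ → F, ∑ i : Fin m, ι (g (i : ℕ)) * θ ^ (i : ℕ)
      = ∑ i ∈ Finset.range m, ι (g i) * θ ^ i :=
    fun g => Fin.sum_univ_eq_sum_range (fun i => ι (g i) * θ ^ i) m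
  have huniqN : ∀ g₁ g₂ : ℕ → F,
      (∑ i ∈ Finset.range m, ι (g₁ i) * θ ^ i) = (∑ i ∈ Finset.range m, ι (g₂ i) * θ ^ i) →
      ∀ i, i < m → g₁ i = g₂ i := by
    intro g₁ g₂ h i hi
    obtain ⟨c, -, hu⟩ := hbasis (∑ i ∈ Finset.range m, ι (g₁ i) * θ ^ i)
    have h1 := hu (fun j : Fin m => g₁ j) (hFinN g₁).symm
    have h2 := hu (fun j : Fin m => g₂ j) (h.trans (hFinN g₂).symm)
    exact congrFun (h1.trans h2.symm) ⟨i, hi⟩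
  have hshiftN : ∀ g : ℕ → F,
      (∑ i ∈ Finset.range m, ι (g i) * θ ^ (i + 1))
      = ∑ j ∈ Finset.range m, ι (if j = 0 then g (m - 1) * b else g (j - 1)) * θ ^ j := by
    intro g
    obtain ⟨M, rfl⟩ : ∃ M, m = M + 1 := ⟨m - 1, by omega⟩
    rw [Finset.sum_range_succ, Finset.sum_range_succ']
    congr 1
    rw [if_pos rfl, Nat.add_sub_cancel, pow_zero, mul_one, hθm, ← hιb, ← map_mul]
  refine le_antisymm ?_ (Algebra.adjoin_le (Set.singleton_subset_iff.mpr hθnc))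
  intro x hx
  have hxc : ∀ y : A, y * x = x * y := Subalgebra.mem_center_iff.mp hx
  obtain ⟨c, hc, -⟩ := hbasis x
  set cN : ℕ → F := fun i => if h : i < m then c ⟨i, h⟩ else 0 with hcNdef
  have hcN : x = ∑ i ∈ Finset.range m, ι (cN i) * θ ^ i := by
    rw [hc, ← hFinN cN]
    refine Finset.sum_congr rfl fun i _ => ?_
    simp [hcNdef, i.isLt]
  have hA1 : ∀ (a : F) (i : ℕ), i < m → a * cN i = cN i * (ζ ^ i) a := by
    intro a
    refine huniqN _ _ ?_
    have e1 : (∑ i ∈ Finset.range m, ι (a * cN i) * θ ^ i) = ι a * x := by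
      rw [hcN, Finset.mul_sum]
      refine Finset.sum_congr rfl fun i _ => ?_
      rw [← mul_assoc, ← map_mul]
    have e2 : (∑ i ∈ Finset.range m, ι (cN i * (ζ ^ i) a) * θ ^ i) = x * ι a := by
      rw [hcN, Finset.sum_mul]
      refine Finset.sum_congr rfl fun i _ => ?_
      rw [mul_assoc, hpow, ← mul_assoc, ← map_mul]
    rw [e1, e2, hxc (ι a)]
  have hdvd : ∀ i : ℕ, i < m → cN i ≠ 0 → n ∣ i := by
    intro i hi h0
    have hfixall : ∀ a : F, (ζ ^ i) a = a := by
      intro a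
      have h1 := hA1 a i hi
      have h2 : cN i * a = cN i * (ζ ^ i) a := by rw [← h1, mul_comm]
      exact (mul_left_cancel₀ h0 h2).symm
    have hpow1 : ζ ^ i = 1 := by
      ext a
      simpa using hfixall a
    rw [← hord]
    exact orderOf_dvd_of_pow_eq_one hpow1
  have h3 : θ * x = ∑ i ∈ Finset.range m, ι (ζ (cN i)) * θ ^ (i + 1) := by
    rw [hcN, Finset.mul_sum]
    refine Finset.sum_congr rfl fun i _ => ?_
    rw [← mul_assoc, hθa, mul_assoc, ← pow_succ']
  have h4 : x * θ = ∑ i ∈ Finset.range m, ι (cN i) * θ ^ (i + 1) := by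
    rw [hcN, Finset.sum_mul]
    refine Finset.sum_congr rfl fun i _ => ?_
    rw [mul_assoc, ← pow_succ]
  have h5 := huniqN (fun j => if j = 0 then ζ (cN (m - 1)) * b else ζ (cN (j - 1)))
      (fun j => if j = 0 then cN (m - 1) * b else cN (j - 1))
      (by rw [← hshiftN (fun i => ζ (cN i)), ← hshiftN cN, ← h3, ← h4, hxc θ])
  have hfixc : ∀ i : ℕ, i < m → ζ (cN i) = cN i := by
    intro i hi
    rcases Nat.lt_or_ge i (m - 1) with h | h
    · have := h5 (i + 1) (by omega)
      simpa using this
    · have hieq : i = m - 1 := by omega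
      have h6 := h5 0 hm0
      simp only [if_pos rfl] at h6
      have := mul_right_cancel₀ hb h6
      rw [hieq]
      exact this
  rw [hcN]
  refine Subalgebra.sum_mem _ fun i hi => ?_
  by_cases h0 : cN i = 0
  · rw [h0, map_zero, zero_mul]
    exact zero_mem _
  · obtain ⟨q, hq⟩ := hdvd i (Finset.mem_range.mp hi) h0
    obtain ⟨r, hr⟩ := (hfix (cN i)).mp (hfixc i (Finset.mem_range.mp hi))
    rw [← hr, ι.commutes, hq, pow_mul]
    refine Subalgebra.mul_mem _ (Subalgebra.algebraMap_mem _ r) ?_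
    exact Subalgebra.pow_mem _ (Algebra.subset_adjoin (Set.mem_singleton _)) q
end

section
/- Let V be a finite-dimensional F-vector space, θ an (F,ζ)-semilinear automorphism of V with θ^m = β·id_V, and ξ ∈ F^×. If there exists a nonzero F-linear endomorphism φ of V with θφθ^{-1} = ξφ, then Nm_{F/k}(ξ)^{m/n} = 1, i.e. Nm_{F/k}(ξ) is an (m/n)-th root of unity in k. -/
/-- Let `F/k` be a degree-`n` cyclic extension with Galois group generated
by `ζ`, `m` a multiple of `n`, `β ∈ k^×`.  Let `V` be a finite-dimensional `F`-vector space
and `θ` an `(F,ζ)`-semilinear automorphism of `V` with `θ^m = β·id`.  If `ξ ∈ F^×` and there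
is a nonzero `F`-linear endomorphism `φ` of `V` with `θ φ θ^{-1} = ξ φ`, then
`Nm_{F/k}(ξ)^{m/n} = 1`. -/
theorem norm_of_eigenvalue_is_root_of_unity
    {k F V : Type*} [Field k] [Field F] [Algebra k F] [FiniteDimensional k F]
    (ζ : F ≃ₐ[k] F) (n m : ℕ) (hn : 0 < n) (hord : orderOf ζ = n)
    (hfix : ∀ x : F, ζ x = x ↔ x ∈ (algebraMap k F).range)
    (hgen : ∀ g : F ≃ₐ[k] F, g ∈ Subgroup.zpowers ζ)
    (hnm : n ∣ m)
    (β : k) (hβ : β ≠ 0)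
    [AddCommGroup V] [Module F V] [FiniteDimensional F V]
    (θ : V → V)
    (hadd : ∀ u v, θ (u + v) = θ u + θ v)
    (hsemi : ∀ (a : F) (v : V), θ (a • v) = ζ a • θ v)
    (hbij : Function.Bijective θ)
    (hθm : ∀ v, θ^[m] v = algebraMap k F β • v)
    (ξ : F) (hξ : ξ ≠ 0)
    (φ : V →ₗ[F] V) (hφ : φ ≠ 0)
    (hrel : ∀ v, θ (φ v) = ξ • φ (θ v)) :
    Algebra.norm k ξ ^ (m / n) = 1 := by
  classical
  -- Galois
  have hGal : IsGalois k F := by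
    apply IsGalois.of_fixedField_eq_bot
    apply le_antisymm
    · intro x hx
      have hx' : ζ x = x := hx ⟨ζ, Subgroup.mem_top ζ⟩
      obtain ⟨y, hy⟩ := (hfix x).mp hx'
      exact ⟨y, hy⟩
    · intro x hx
      obtain ⟨y, hy⟩ := IntermediateField.mem_bot.mp hx
      intro g
      obtain ⟨z, hz⟩ := hgen g
      subst hy
      simp [← hz]
  -- iterated relation
  have key : ∀ (j : ℕ) (v : V),
      θ^[j] (φ v) = (∏ i ∈ Finset.range j, (ζ ^ i) ξ) • φ (θ^[j] v) := by
    intro j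
    induction j with
    | zero => intro v; simp
    | succ j ih =>
      intro v
      rw [Function.iterate_succ_apply', ih v, hsemi, map_prod]
      rw [hrel (θ^[j] v), smul_smul]
      conv_rhs => rw [Function.iterate_succ_apply']
      congr 1
      rw [Finset.prod_range_succ' (fun i => (ζ ^ i) ξ)]
      congr 1
      apply Finset.prod_congr rfl
      intro i _
      simp [pow_succ']
  -- evaluate at m
  obtain ⟨v, hv⟩ : ∃ v, φ v ≠ 0 := by
    by_contra h
    push_neg at h
    exact hφ (LinearMap.ext fun v => h v)
  have hβF : algebraMap k F β ≠ 0 := by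
    simpa using hβ
  have hm := key m v
  rw [hθm (φ v), hθm v, map_smul, smul_smul] at hm
  have hc : (∏ i ∈ Finset.range m, (ζ ^ i) ξ) = 1 := by
    have h := hm
    rw [← sub_eq_zero, ← sub_smul, smul_eq_zero] at h
    have h2 := h.resolve_right hv
    have h3 : algebraMap k F β * (1 - ∏ i ∈ Finset.range m, (ζ ^ i) ξ) = 0 := by
      linear_combination h2
    exact (sub_eq_zero.mp ((mul_eq_zero.mp h3).resolve_left hβF)).symm
  -- the period-n product
  set N : F := ∏ i ∈ Finset.range n, (ζ ^ i) ξ with hN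
  obtain ⟨q, hq⟩ := hnm
  have hper : ∀ t : ℕ, (∏ i ∈ Finset.range (n * t), (ζ ^ i) ξ) = N ^ t := by
    intro t
    induction t with
    | zero => simp
    | succ t ih =>
      rw [Nat.mul_succ, Finset.prod_range_add, ih, pow_succ]
      congr 1
      apply Finset.prod_congr rfl
      intro i _
      congr 1
      rw [pow_add, ← hord]
      rw [pow_mul, pow_orderOf_eq_one, one_pow, one_mul]
  have hmn : m / n = q := by rw [hq, Nat.mul_div_cancel_left _ hn]
  have hNq : N ^ q = 1 := by rw [← hper q, ← hq, hc]
  -- N is the norm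
  have hnorm : algebraMap k F (Algebra.norm k ξ) = N := by
    rw [Algebra.norm_eq_prod_automorphisms, hN]
    symm
    apply Finset.prod_nbij (fun i => ζ ^ i)
    · intro i _; exact Finset.mem_univ _
    · intro i hi j hj hij
      simp only [Finset.coe_range, Set.mem_Iio] at hi hj
      have hij' : ζ ^ i = ζ ^ j := hij
      rw [pow_eq_pow_iff_modEq, hord, Nat.ModEq, Nat.mod_eq_of_lt hi, Nat.mod_eq_of_lt hj]
        at hij'
      exact hij'
    · intro g _
      obtain ⟨z, hz⟩ := hgen g
      refine ⟨(z % (n : ℤ)).toNat, ?_, ?_⟩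
      · simp only [Finset.coe_range, Set.mem_Iio]
        have h1 : 0 ≤ z % (n : ℤ) := Int.emod_nonneg z (by exact_mod_cast hn.ne')
        have h2 : z % (n : ℤ) < n := Int.emod_lt_of_pos z (by exact_mod_cast hn)
        omega
      · rw [← hz]
        show ζ ^ (z % (n : ℤ)).toNat = ζ ^ z
        rw [← zpow_natCast,
          Int.toNat_of_nonneg (Int.emod_nonneg z (by exact_mod_cast hn.ne')),
          ← hord, zpow_mod_orderOf]
    · intro i _; rfl
  have : algebraMap k F (Algebra.norm k ξ ^ (m / n)) = algebraMap k F 1 := by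
    rw [map_pow, hnorm, map_one, hmn, hNq]
  exact (algebraMap k F).injective this
end

section
/- For ξ ∈ F^× with Nm_{F/k}(ξ) ∈ μ_{m/n}(k), the assignment θ ↦ ξθ (and identity on F) extends to a well-defined F-algebra automorphism μ_ξ of A_β, and μ_ξ restricts on the center L_β = k[b] (b the image of θ^n) to the automorphism b ↦ Nm_{F/k}(ξ)·b. -/
/-!
Put `ν_t(ξ) = ξ · ζ(ξ) ⋯ ζ^{t-1}(ξ)`; then `(ξθ)^t = ν_t(ξ) θ^t`, so `μ_ξ` has to multiply the
`t`-th coordinate in the basis `1, θ, …, θ^{m-1}` by `ν_t(ξ)`. This map is multiplicative by the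
cocycle identity `ν_{s+t} = ν_s · ζ^s(ν_t)`, and it respects `θ^m = β` because
`ν_m(ξ) = ν_n(ξ)^{m/n} = Nm(ξ)^{m/n} = 1`, where `ν_n = Nm` as `ζ` generates the Galois group.
Its inverse is the map built from `ξ⁻¹`, and it is unique since `ι(F)` and `θ` generate `A`.
-/

open Finset Function

section TwistedNorm

variable {k F : Type*} [CommSemiring k] [CommSemiring F] [Algebra k F] (σ : F ≃ₐ[k] F)

def twistedNorm (ξ : F) (t : ℕ) : F := ∏ j ∈ range t, (σ ^ j) ξ

@[simp]
lemma twistedNorm_zero (ξ : F) : twistedNorm σ ξ 0 = 1 := prod_range_zero _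

@[simp]
lemma twistedNorm_one (ξ : F) : twistedNorm σ ξ 1 = ξ := by simp [twistedNorm]

lemma twistedNorm_add (ξ : F) (s t : ℕ) :
    twistedNorm σ ξ (s + t) = twistedNorm σ ξ s * (σ ^ s) (twistedNorm σ ξ t) := by
  simp only [twistedNorm, prod_range_add, map_prod, ← AlgEquiv.mul_apply, ← pow_add]

lemma twistedNorm_mul_of_pow_eq_one {n : ℕ} (hσn : σ ^ n = 1) (ξ : F) (q : ℕ) :
    twistedNorm σ ξ (n * q) = twistedNorm σ ξ n ^ q := by
  induction q with
  | zero => simp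
  | succ q ih => rw [Nat.mul_succ, twistedNorm_add, ih, pow_mul, hσn, one_pow, pow_succ]; rfl

lemma twistedNorm_mod_of_pow_eq_one {m : ℕ} (hσm : σ ^ m = 1) {ξ : F}
    (hν : twistedNorm σ ξ m = 1) (t : ℕ) : twistedNorm σ ξ t = twistedNorm σ ξ (t % m) := by
  conv_lhs => rw [← Nat.div_add_mod t m]
  rw [twistedNorm_add, twistedNorm_mul_of_pow_eq_one σ hσm, hν, one_pow, one_mul, pow_mul, hσm,
    one_pow]
  rfl

end TwistedNorm

lemma twistedNorm_inv {k F : Type*} [CommSemiring k] [Field F] [Algebra k F] (σ : F ≃ₐ[k] F)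
    (ξ : F) (t : ℕ) : twistedNorm σ ξ⁻¹ t = (twistedNorm σ ξ t)⁻¹ := by
  simp only [twistedNorm, map_inv₀, prod_inv_distrib]

section Galois

variable {k F : Type*} [Field k] [Field F] [Algebra k F] (σ : F ≃ₐ[k] F)

lemma isGalois_of_fixed_mem_range [FiniteDimensional k F]
    (hfix : ∀ x : F, σ x = x → x ∈ (algebraMap k F).range) : IsGalois k F := by
  refine IsGalois.of_fixedField_eq_bot _ _ (eq_bot_iff.2 fun x hx => ?_)
  exact IntermediateField.mem_bot.2 (hfix x (hx ⟨σ, Subgroup.mem_top σ⟩))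

lemma twistedNorm_orderOf [FiniteDimensional k F] [IsGalois k F]
    (hgen : ∀ g : F ≃ₐ[k] F, g ∈ Subgroup.zpowers σ) (ξ : F) :
    twistedNorm σ ξ (orderOf σ) = algebraMap k F (Algebra.norm k ξ) := by
  classical
  rw [Algebra.norm_eq_prod_automorphisms, ← IsCyclic.image_range_orderOf hgen,
    prod_image fun i hi j hj => pow_injOn_Iio_orderOf (by simpa using hi) (by simpa using hj)]
  rfl

end Galois

section TwistedPolynomialQuotient

variable {k F A : Type*} [CommSemiring k] [CommSemiring F] [Algebra k F] [Semiring A]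
  [Algebra k A] {σ : F ≃ₐ[k] F} {ι : F →ₐ[k] A} {θ : A} {m : ℕ}

lemma pow_mul_eq_of_mul_eq (hθ : ∀ a : F, θ * ι a = ι (σ a) * θ) (t : ℕ) (a : F) :
    θ ^ t * ι a = ι ((σ ^ t) a) * θ ^ t := by
  induction t with
  | zero => simp
  | succ t ih =>
    rw [pow_succ', mul_assoc, ih, ← mul_assoc, hθ, mul_assoc, ← pow_succ', pow_succ' σ,
      AlgEquiv.mul_apply]

lemma monomial_mul_monomial (hθ : ∀ a : F, θ * ι a = ι (σ a) * θ) (a b : F) (i j : ℕ) :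
    ι a * θ ^ i * (ι b * θ ^ j) = ι (a * (σ ^ i) b) * θ ^ (i + j) := by
  rw [mul_assoc, ← mul_assoc (θ ^ i), pow_mul_eq_of_mul_eq hθ, map_mul, pow_add]
  simp only [mul_assoc]

lemma mul_pow_eq_mul_pow_mod {β : k} (hθm : θ ^ m = algebraMap k A β) (a : F) (t : ℕ) :
    ι a * θ ^ t = ι (a * algebraMap k F (β ^ (t / m))) * θ ^ (t % m) := by
  conv_lhs => rw [← Nat.div_add_mod t m]
  rw [pow_add, pow_mul, hθm, map_mul, ι.commutes, ← map_pow, mul_assoc]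

variable (ι θ m) in
def monomialSum : (Fin m → F) →ₗ[k] A where
  toFun c := ∑ i, ι (c i) * θ ^ (i : ℕ)
  map_add' c d := by simp only [Pi.add_apply, map_add, add_mul, sum_add_distrib]
  map_smul' r c := by
    simp only [Pi.smul_apply, map_smul, smul_mul_assoc, smul_sum, RingHom.id_apply]

lemma monomialSum_apply (c : Fin m → F) : monomialSum ι θ m c = ∑ i, ι (c i) * θ ^ (i : ℕ) := rfl

lemma monomialSum_single (i : Fin m) (a : F) :
    monomialSum ι θ m (Pi.single i a) = ι a * θ ^ (i : ℕ) := by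
  rw [monomialSum_apply, sum_eq_single i (fun j _ hj => by simp [Pi.single_eq_of_ne hj])
    (by simp), Pi.single_eq_same]

lemma algHom_ext_of_surjective_monomialSum {B : Type*} [Semiring B] [Algebra k B]
    (hs : Surjective (monomialSum ι θ m)) {f g : A →ₐ[k] B} (hι : ∀ a, f (ι a) = g (ι a))
    (hθ : f θ = g θ) : f = g := by
  ext x
  obtain ⟨c, rfl⟩ := hs x
  simp only [monomialSum_apply, map_sum, map_mul, map_pow, hι, hθ]

lemma map_mul_of_map_monomial (hθ : ∀ a : F, θ * ι a = ι (σ a) * θ)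
    (hs : Surjective (monomialSum ι θ m)) {ξ : F} {f : A →ₗ[k] A}
    (hf : ∀ a t, f (ι a * θ ^ t) = ι (a * twistedNorm σ ξ t) * θ ^ t) (x y : A) :
    f (x * y) = f x * f y := by
  obtain ⟨c, rfl⟩ := hs x
  obtain ⟨d, rfl⟩ := hs y
  simp only [monomialSum_apply, sum_mul_sum, map_sum, monomial_mul_monomial hθ, hf]
  refine sum_congr rfl fun i _ => sum_congr rfl fun j _ => ?_
  congr 2
  rw [twistedNorm_add, map_mul]
  ring

variable (σ) in
noncomputable def twistLinearMap (hbij : Bijective (monomialSum ι θ m)) (ξ : F) : A →ₗ[k] A :=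
  monomialSum ι θ m ∘ₗ
    LinearMap.pi (fun i => LinearMap.mulRight k (twistedNorm σ ξ i) ∘ₗ LinearMap.proj i) ∘ₗ
    (LinearEquiv.ofBijective _ hbij).symm.toLinearMap

lemma twistLinearMap_monomialSum (hbij : Bijective (monomialSum ι θ m)) (ξ : F)
    (c : Fin m → F) :
    twistLinearMap σ hbij ξ (monomialSum ι θ m c) =
      monomialSum ι θ m (c * fun i : Fin m => twistedNorm σ ξ i) := by
  simp only [twistLinearMap, LinearMap.coe_comp, comp_apply, LinearEquiv.coe_coe,
    LinearEquiv.ofBijective_symm_apply_apply]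
  rfl

lemma twistLinearMap_monomial_of_lt (hbij : Bijective (monomialSum ι θ m)) (ξ : F) (a : F)
    {t : ℕ} (ht : t < m) :
    twistLinearMap σ hbij ξ (ι a * θ ^ t) = ι (a * twistedNorm σ ξ t) * θ ^ t := by
  rw [← monomialSum_single (⟨t, ht⟩ : Fin m), twistLinearMap_monomialSum, ← Pi.single_mul_left,
    monomialSum_single]

lemma twistLinearMap_monomial {β : k} (hσm : σ ^ m = 1) (hθm : θ ^ m = algebraMap k A β)
    (hbij : Bijective (monomialSum ι θ m)) {ξ : F} (hν : twistedNorm σ ξ m = 1) (a : F) (t : ℕ) :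
    twistLinearMap σ hbij ξ (ι a * θ ^ t) = ι (a * twistedNorm σ ξ t) * θ ^ t := by
  rcases m.eq_zero_or_pos with rfl | hm
  · have : Subsingleton A := hbij.2.subsingleton
    exact Subsingleton.elim _ _
  rw [mul_pow_eq_mul_pow_mod hθm a, twistLinearMap_monomial_of_lt _ _ _ (Nat.mod_lt t hm),
    ← twistedNorm_mod_of_pow_eq_one σ hσm hν, mul_pow_eq_mul_pow_mod hθm (a * _), mul_right_comm]

lemma exists_algHom_twist {β : k} (hσm : σ ^ m = 1) (hθ : ∀ a : F, θ * ι a = ι (σ a) * θ)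
    (hθm : θ ^ m = algebraMap k A β) (hbij : Bijective (monomialSum ι θ m)) {ξ : F}
    (hν : twistedNorm σ ξ m = 1) :
    ∃ g : A →ₐ[k] A, ∀ a t, g (ι a * θ ^ t) = ι (a * twistedNorm σ ξ t) * θ ^ t := by
  have hf := twistLinearMap_monomial hσm hθm hbij hν
  refine ⟨AlgHom.ofLinearMap _ ?_ (map_mul_of_map_monomial hθ hbij.2 hf), hf⟩
  simpa using hf 1 0

lemma comp_eq_id_of_map_monomial (hs : Surjective (monomialSum ι θ m)) {ξ η : F}
    (hξη : η * ξ = 1) {f g : A →ₐ[k] A}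
    (hf : ∀ a t, f (ι a * θ ^ t) = ι (a * twistedNorm σ ξ t) * θ ^ t)
    (hg : ∀ a t, g (ι a * θ ^ t) = ι (a * twistedNorm σ η t) * θ ^ t) :
    f.comp g = AlgHom.id k A := by
  have hgι (a : F) : g (ι a) = ι a := by simpa using hg a 0
  have hfι (a : F) : f (ι a) = ι a := by simpa using hf a 0
  have hgθ : g θ = ι η * θ := by simpa using hg 1 1
  have hfθ : f (ι η * θ) = ι (η * ξ) * θ := by simpa using hf η 1
  refine algHom_ext_of_surjective_monomialSum hs (fun a => ?_) ?_
  · simp [hgι, hfι]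
  · simp [hgθ, hfθ, hξη]

lemma exists_algEquiv_twist {F : Type*} [Field F] [Algebra k F] {σ : F ≃ₐ[k] F}
    {ι : F →ₐ[k] A} {β : k} (hσm : σ ^ m = 1) (hθ : ∀ a : F, θ * ι a = ι (σ a) * θ)
    (hθm : θ ^ m = algebraMap k A β) (hbij : Bijective (monomialSum ι θ m)) {ξ : F} (hξ : ξ ≠ 0)
    (hν : twistedNorm σ ξ m = 1) :
    ∃ μ : A ≃ₐ[k] A, ∀ a t, μ (ι a * θ ^ t) = ι (a * twistedNorm σ ξ t) * θ ^ t := by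
  obtain ⟨f, hf⟩ := exists_algHom_twist hσm hθ hθm hbij hν
  obtain ⟨g, hg⟩ := exists_algHom_twist (ξ := ξ⁻¹) hσm hθ hθm hbij
    (by rw [twistedNorm_inv, hν, inv_one])
  exact ⟨AlgEquiv.ofAlgHom f g (comp_eq_id_of_map_monomial hbij.2 (inv_mul_cancel₀ hξ) hf hg)
    (comp_eq_id_of_map_monomial hbij.2 (mul_inv_cancel₀ hξ) hg hf), hf⟩

end TwistedPolynomialQuotient

theorem twist_automorphism_exists_general
    {k F A : Type*} [Field k] [Field F] [Algebra k F]
    [FiniteDimensional k F]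
    (ζ : F ≃ₐ[k] F) (n m : ℕ) (hn : 0 < n) (hord : orderOf ζ = n)
    (hfix : ∀ x : F, ζ x = x ↔ x ∈ (algebraMap k F).range)
    (hgen : ∀ g : F ≃ₐ[k] F, g ∈ Subgroup.zpowers ζ)
    (hnm : n ∣ m)
    (β : k)
    [Ring A] [Algebra k A] (ι : F →ₐ[k] A) (θ : A)
    (hθa : ∀ a : F, θ * ι a = ι (ζ a) * θ)
    (hθm : θ ^ m = algebraMap k A β)
    (hbasis : ∀ x : A, ∃! c : Fin m → F, x = ∑ i : Fin m, ι (c i) * θ ^ (i : ℕ))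
    (ξ : F) (hξ : ξ ≠ 0) (hnorm : Algebra.norm k ξ ^ (m / n) = 1) :
    ∃ μ : A ≃ₐ[k] A,
      (∀ a : F, μ (ι a) = ι a) ∧
      μ θ = ι ξ * θ ∧
      μ (θ ^ n) = ι (algebraMap k F (Algebra.norm k ξ)) * θ ^ n ∧
      ∀ μ' : A ≃ₐ[k] A, (∀ a : F, μ' (ι a) = ι a) → μ' θ = ι ξ * θ → μ' = μ := by
  have : IsGalois k F := isGalois_of_fixed_mem_range ζ fun x => (hfix x).1
  have hνn : twistedNorm ζ ξ n = algebraMap k F (Algebra.norm k ξ) :=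
    hord ▸ twistedNorm_orderOf ζ hgen ξ
  have hζn : ζ ^ n = 1 := hord ▸ pow_orderOf_eq_one ζ
  obtain ⟨q, rfl⟩ := hnm
  have hνm : twistedNorm ζ ξ (n * q) = 1 := by
    rw [twistedNorm_mul_of_pow_eq_one ζ hζn, hνn, ← map_pow, ← Nat.mul_div_cancel_left q hn, hnorm,
      map_one]
  have hbij : Bijective (monomialSum ι θ (n * q)) :=
    (bijective_iff_existsUnique _).2 fun x => by
      simpa only [eq_comm, monomialSum_apply] using hbasis x
  obtain ⟨μ, hμ⟩ := exists_algEquiv_twist (by rw [pow_mul, hζn, one_pow]) hθa hθm hbij hξ hνm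
  refine ⟨μ, fun a => by simpa using hμ a 0, by simpa using hμ 1 1, by simpa [hνn] using hμ 1 n,
    fun μ' hι hθ => AlgEquiv.coe_toAlgHom_injective ?_⟩
  exact algHom_ext_of_surjective_monomialSum hbij.2 (fun a => by simpa [hι] using (hμ a 0).symm)
    (by simpa [hθ] using (hμ 1 1).symm)

/-- Let `A = A_β = F⟨θ⟩/(θ^m - β)` (presented as a `k`-algebra with
embedding `ι : F → A`, element `θ` with the twisted relations and `F`-basis
`1, θ, …, θ^{m-1}`).  For `ξ ∈ F^×` with `Nm_{F/k}(ξ)` an `(m/n)`-th root of unity, there is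
a unique `F`-algebra automorphism `μ_ξ` of `A` fixing `ι(F)` pointwise and sending
`θ ↦ ξ·θ`; it restricts on the center `k[θ^n]` to `θ^n ↦ Nm_{F/k}(ξ)·θ^n`. -/
theorem twist_automorphism_exists
    {k F A : Type*} [Field k] [Field F] [Algebra k F]
    [FiniteDimensional k F] [Algebra.IsSeparable k F]
    (ζ : F ≃ₐ[k] F) (n m : ℕ) (hn : 0 < n) (hord : orderOf ζ = n)
    (hfix : ∀ x : F, ζ x = x ↔ x ∈ (algebraMap k F).range)
    (hgen : ∀ g : F ≃ₐ[k] F, g ∈ Subgroup.zpowers ζ)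
    (hnm : n ∣ m)
    (β : k) (hβ : β ≠ 0)
    [Ring A] [Algebra k A] (ι : F →ₐ[k] A) (θ : A)
    (hθa : ∀ a : F, θ * ι a = ι (ζ a) * θ)
    (hθm : θ ^ m = algebraMap k A β)
    (hbasis : ∀ x : A, ∃! c : Fin m → F, x = ∑ i : Fin m, ι (c i) * θ ^ (i : ℕ))
    (ξ : F) (hξ : ξ ≠ 0) (hnorm : Algebra.norm k ξ ^ (m / n) = 1) :
    ∃ μ : A ≃ₐ[k] A,
      (∀ a : F, μ (ι a) = ι a) ∧
      μ θ = ι ξ * θ ∧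
      μ (θ ^ n) = ι (algebraMap k F (Algebra.norm k ξ)) * θ ^ n ∧
      ∀ μ' : A ≃ₐ[k] A, (∀ a : F, μ' (ι a) = ι a) → μ' θ = ι ξ * θ → μ' = μ :=
  twist_automorphism_exists_general ζ n m hn hord hfix hgen hnm β ι θ hθa hθm hbasis ξ hξ hnorm
end

section
/- Let σ be an involution of F commuting with ζ and c ∈ (F^×)^σ with Nm_{F/k}(c)^{m/n} = β·σ(β). On the σ-twisted F-linear dual U^⋆ of a finite-dimensional A_β-module U, the (F,ζ)-semilinear operator θ defined by (θu^*, u) = c·ζ(u^*, θ^{-1}u) satisfies θ^m = β·id_{U^⋆}; hence U^⋆ is again an A_β-module. -/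
/-!
Unwinding the definition, `Θ^j f (u) = (∏_{i<j} ζ^i(c)) · ζ^j (f (θ'^j u))`. For `j = m` we have
`ζ^m = 1`, and since the automorphisms of `F/k` are the powers of `ζ`, the product of the
conjugates `ζ^i(c)` over `i < m` is `Nm_{F/k}(c)^{m/n} = β σ(β)`. Finally `θ^m = β` gives
`β · θ'^m u = u`, so the factor `β` is absorbed by `f` and `Θ^m f = σ(β) f`.
-/

open Finset

theorem Function.Periodic.prod_range_mul {M : Type*} [CommMonoid M] {f : ℕ → M} {n : ℕ}
    (hf : Function.Periodic f n) (q : ℕ) :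
    ∏ i ∈ range (n * q), f i = (∏ i ∈ range n, f i) ^ q := by
  induction q with
  | zero => simp
  | succ q ih =>
    rw [Nat.mul_succ, prod_range_add, ih, pow_succ]
    congr 1
    refine prod_congr rfl fun i _ => ?_
    rw [add_comm, mul_comm]
    exact hf.nat_mul q i

section Norm

variable {k F : Type*} [Field k] [Field F] [Algebra k F] [FiniteDimensional k F]

theorem isGalois_of_fixedPoints_subset_range (ζ : F ≃ₐ[k] F)
    (hfix : ∀ x : F, ζ x = x → x ∈ (algebraMap k F).range) : IsGalois k F := by
  refine IsGalois.of_fixedField_eq_bot _ _ (eq_bot_iff.mpr fun x hx => ?_)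
  exact IntermediateField.mem_bot.mpr (hfix x (hx ⟨ζ, Subgroup.mem_top ζ⟩))

theorem algebraMap_norm_eq_prod_range_orderOf [IsGalois k F] {ζ : F ≃ₐ[k] F}
    (hgen : ∀ g : F ≃ₐ[k] F, g ∈ Subgroup.zpowers ζ) (x : F) :
    algebraMap k F (Algebra.norm k x) = ∏ i ∈ range (orderOf ζ), (ζ ^ i) x := by
  rw [Algebra.norm_eq_prod_automorphisms, ← Fin.prod_univ_eq_prod_range]
  exact (Fintype.prod_equiv ((finEquivZPowers (isOfFinOrder_of_finite ζ)).trans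
    (Equiv.subtypeUnivEquiv hgen)) _ _ fun _ => rfl).symm

theorem prod_range_pow_apply_eq_norm_pow [IsGalois k F] {ζ : F ≃ₐ[k] F}
    (hgen : ∀ g : F ≃ₐ[k] F, g ∈ Subgroup.zpowers ζ) {m : ℕ} (hm : orderOf ζ ∣ m) (x : F) :
    ∏ i ∈ range m, (ζ ^ i) x = algebraMap k F (Algebra.norm k x ^ (m / orderOf ζ)) := by
  obtain ⟨q, rfl⟩ := hm
  have hperiodic : Function.Periodic (fun i => (ζ ^ i) x) (orderOf ζ) := fun i => by
    simp only [pow_add, pow_orderOf_eq_one, mul_one]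
  rw [hperiodic.prod_range_mul, Nat.mul_div_cancel_left _ (orderOf_pos ζ), map_pow,
    algebraMap_norm_eq_prod_range_orderOf hgen]

end Norm

theorem iterate_apply_eq_prod_mul_of_apply_eq {k F U : Type*} [CommSemiring k] [CommSemiring F]
    [Algebra k F] [AddCommMonoid U] [Module F U] (ζ : F ≃ₐ[k] F) (c : F) (θ' : U → U)
    {Θ : (U →ₗ[F] F) → (U →ₗ[F] F)} (hΘ : ∀ (f : U →ₗ[F] F) (u : U), Θ f u = c * ζ (f (θ' u)))
    (j : ℕ) (f : U →ₗ[F] F) (u : U) :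
    Θ^[j] f u = (∏ i ∈ range j, (ζ ^ i) c) * (ζ ^ j) (f (θ'^[j] u)) := by
  induction j generalizing u with
  | zero => simp
  | succ j ih =>
    rw [Function.iterate_succ_apply', hΘ, ih, Function.iterate_succ_apply, prod_range_succ',
      map_mul, map_prod]
    simp only [pow_succ', AlgEquiv.mul_apply, pow_zero, AlgEquiv.one_apply]
    ring

theorem twisted_dual_is_Abeta_module_general
    {k F U : Type*} [Field k] [Field F] [Algebra k F] [FiniteDimensional k F]
    (ζ : F ≃ₐ[k] F) (n m : ℕ) (hord : orderOf ζ = n)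
    (hfix : ∀ x : F, ζ x = x ↔ x ∈ (algebraMap k F).range)
    (hgen : ∀ g : F ≃ₐ[k] F, g ∈ Subgroup.zpowers ζ)
    (hnm : n ∣ m)
    (β : k)
    (σ : F ≃+* F) (hσζ : ∀ a, σ (ζ a) = ζ (σ a))
    (c : F)
    (hnorm : algebraMap k F (Algebra.norm k c ^ (m / n)) =
      algebraMap k F β * σ (algebraMap k F β))
    [AddCommGroup U] [Module F U]
    (θ θ' : U → U)
    (hθθ' : ∀ u, θ (θ' u) = u)
    (hθm : ∀ u, θ^[m] u = algebraMap k F β • u)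
    (Θ : (U →ₗ[F] F) → (U →ₗ[F] F))
    (hΘ : ∀ (f : U →ₗ[F] F) (u : U), Θ f u = c * ζ (f (θ' u))) :
    (∀ (f g : U →ₗ[F] F), Θ (f + g) = Θ f + Θ g) ∧
    (∀ (a : F) (f : U →ₗ[F] F), Θ (σ a • f) = σ (ζ a) • Θ f) ∧
    (∀ f : U →ₗ[F] F, Θ^[m] f = σ (algebraMap k F β) • f) := by
  subst hord
  have := isGalois_of_fixedPoints_subset_range ζ fun x => (hfix x).mp
  refine ⟨fun f g => ?_, fun a f => ?_, fun f => LinearMap.ext fun u => ?_⟩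
  · ext u
    simp only [hΘ, LinearMap.add_apply, map_add, mul_add]
  · ext u
    simp only [hΘ, LinearMap.smul_apply, smul_eq_mul, map_mul, hσζ]
    ring
  · have hβθ' : algebraMap k F β • θ'^[m] u = u := by
      rw [← hθm, Function.LeftInverse.iterate hθθ' m]
    rw [iterate_apply_eq_prod_mul_of_apply_eq ζ c θ' hΘ, prod_range_pow_apply_eq_norm_pow hgen hnm,
      hnorm, orderOf_dvd_iff_pow_eq_one.mp hnm, AlgEquiv.one_apply, LinearMap.smul_apply,
      smul_eq_mul]
    conv_rhs => rw [← hβθ', map_smul, smul_eq_mul]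
    ring

/-- Let `σ` be an involution of `F` commuting with `ζ` and `c ∈ (F^×)^σ`
with `Nm_{F/k}(c)^{m/n} = β·σ(β)`.  Let `U` be a finite-dimensional `F`-vector space with an
`(F,ζ)`-semilinear automorphism `θ` (with inverse `θ'`) satisfying `θ^m = β·id`.  On the
`σ`-twisted dual `U^⋆` (underlying space `Hom_F(U,F)`, new action `a ∙ f = σ(a) • f`), the
operator `Θ` defined by `(Θ f)(u) = c·ζ(f(θ'(u)))` is `(F,ζ)`-semilinear for the twisted
structure and satisfies `Θ^m = β·id_{U^⋆}` (i.e. `Θ^m f = σ(β) • f` for the untwisted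
action); hence `U^⋆` is again an `A_β`-module. -/
theorem twisted_dual_is_Abeta_module
    {k F U : Type*} [Field k] [Field F] [Algebra k F] [FiniteDimensional k F]
    (hch : (2 : k) ≠ 0)
    (ζ : F ≃ₐ[k] F) (n m : ℕ) (hn : 0 < n) (hord : orderOf ζ = n)
    (hfix : ∀ x : F, ζ x = x ↔ x ∈ (algebraMap k F).range)
    (hgen : ∀ g : F ≃ₐ[k] F, g ∈ Subgroup.zpowers ζ)
    (hnm : n ∣ m)
    (β : k) (hβ : β ≠ 0)
    (σ : F ≃+* F) (hσinv : ∀ a, σ (σ a) = a) (hσζ : ∀ a, σ (ζ a) = ζ (σ a))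
    (c : F) (hc : c ≠ 0) (hcσ : σ c = c)
    (hnorm : algebraMap k F (Algebra.norm k c ^ (m / n)) =
      algebraMap k F β * σ (algebraMap k F β))
    [AddCommGroup U] [Module F U] [FiniteDimensional F U]
    (θ θ' : U → U)
    (hadd : ∀ u v, θ (u + v) = θ u + θ v)
    (hsemi : ∀ (a : F) (u : U), θ (a • u) = ζ a • θ u)
    (hθθ' : ∀ u, θ (θ' u) = u) (hθ'θ : ∀ u, θ' (θ u) = u)
    (hθm : ∀ u, θ^[m] u = algebraMap k F β • u)
    (Θ : (U →ₗ[F] F) → (U →ₗ[F] F))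
    (hΘ : ∀ (f : U →ₗ[F] F) (u : U), Θ f u = c * ζ (f (θ' u))) :
    (∀ (f g : U →ₗ[F] F), Θ (f + g) = Θ f + Θ g) ∧
    (∀ (a : F) (f : U →ₗ[F] F), Θ (σ a • f) = σ (ζ a) • Θ f) ∧
    (∀ f : U →ₗ[F] F, Θ^[m] f = σ (algebraMap k F β) • f) :=
  twisted_dual_is_Abeta_module_general ζ n m hord hfix hgen hnm β σ hσζ c hnorm θ θ' hθθ' hθm Θ hΘ
end

section
/- For ξ ∈ F^× with Nm_{F/k}(ξ) ∈ μ_{m/n}(k), there is a canonical isomorphism of A_β-modules (U^ξ)^⋆ ≅ (U^⋆)^{σ(ξ)^{-1}} which is the identity on underlying F-vector spaces. -/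
/-- In the polarized duality setup, for `ξ ∈ F^×` with
`Nm_{F/k}(ξ) ∈ μ_{m/n}(k)`, the canonical isomorphism `(U^ξ)^⋆ ≅ (U^⋆)^{σ(ξ)^{-1}}` is the
identity on underlying `F`-vector spaces: the `θ`-operator of `(U^ξ)^⋆`, namely
`f ↦ (u ↦ c·ζ(f((ξ·θ)^{-1} u)))`, equals the `σ(ξ)^{-1}`-twist of the `θ`-operator
`Θ : f ↦ (u ↦ c·ζ(f(θ' u)))` of `U^⋆`, i.e. the operator `f ↦ σ(σ(ξ)^{-1}) • Θ f` (the
scalar `σ(ξ)^{-1}` acting via the `σ`-twisted module structure of `U^⋆`). -/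
theorem twist_dual_compatibility
    {k F U : Type*} [Field k] [Field F] [Algebra k F] [FiniteDimensional k F]
    (hch : (2 : k) ≠ 0)
    (ζ : F ≃ₐ[k] F) (n m : ℕ) (hn : 0 < n) (hord : orderOf ζ = n)
    (hfix : ∀ x : F, ζ x = x ↔ x ∈ (algebraMap k F).range)
    (hnm : n ∣ m)
    (β : k) (hβ : β ≠ 0)
    (σ : F ≃+* F) (hσinv : ∀ a, σ (σ a) = a) (hσζ : ∀ a, σ (ζ a) = ζ (σ a))
    (c : F) (hc : c ≠ 0) (hcσ : σ c = c)
    (hnorm : algebraMap k F (Algebra.norm k c ^ (m / n)) =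
      algebraMap k F β * σ (algebraMap k F β))
    [AddCommGroup U] [Module F U] [FiniteDimensional F U]
    (θ θ' : U → U)
    (hadd : ∀ u v, θ (u + v) = θ u + θ v)
    (hsemi : ∀ (a : F) (u : U), θ (a • u) = ζ a • θ u)
    (hθθ' : ∀ u, θ (θ' u) = u) (hθ'θ : ∀ u, θ' (θ u) = u)
    (hθm : ∀ u, θ^[m] u = algebraMap k F β • u)
    (ξ : F) (hξ : ξ ≠ 0) (hnormξ : Algebra.norm k ξ ^ (m / n) = 1) :
    ∀ (f : U →ₗ[F] F) (u : U),
      c * ζ (f (θ' (ξ⁻¹ • u))) = σ ((σ ξ)⁻¹) * (c * ζ (f (θ' u))) := by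
  intro f u
  have hσξ : σ ((σ ξ)⁻¹) = ξ⁻¹ := by
    rw [map_inv₀, hσinv]
  have key : θ' (ξ⁻¹ • u) = (ζ.symm ξ⁻¹) • θ' u := by
    have : θ ((ζ.symm ξ⁻¹) • θ' u) = ξ⁻¹ • u := by
      rw [hsemi, ζ.apply_symm_apply, hθθ']
    calc θ' (ξ⁻¹ • u) = θ' (θ ((ζ.symm ξ⁻¹) • θ' u)) := by rw [this]
    _ = (ζ.symm ξ⁻¹) • θ' u := hθ'θ _
  rw [key, map_smul, smul_eq_mul, map_mul, ζ.apply_symm_apply, hσξ]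
  ring
end

section
/- For ξ ∈ F^× fixed by σ with Nm_{F/k}(ξ) ∈ μ_{m/n}(k), the automorphisms of L_β satisfy σ_c ∘ μ_ξ ∘ σ_c = μ_{ξ^{-1}}; consequently the induced involution i ↦ i^⋆ on I = Spec L_β reverses all arrows of the quiver Q_ξ (the graph on I with an arrow i → ξ̄(i) for each i, where ξ̄ is the permutation induced by μ_ξ). -/
open Polynomial

/-- On `L_β = k[b]/(b^N - β)`, let `φ = σ_c` be the automorphism acting
as `σ` on `k` with `φ(b)·b = γ` (`γ = Nm_{F/k}(c)`), and for `u = Nm_{F/k}(ξ)` (an `N`-th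
root of unity fixed by `σ`, since `σ(ξ) = ξ`) let `μ = μ_ξ` (resp. `μ' = μ_{ξ^{-1}}`) be the
`k`-automorphism with `b ↦ u·b` (resp. `b ↦ u^{-1}·b`).  Then `σ_c ∘ μ_ξ ∘ σ_c = μ_{ξ^{-1}}`;
consequently the induced involution `i ↦ i^⋆` on `I = Spec L_β` reverses the arrows of the
quiver `Q_ξ`: on prime spectra, `(⋆) ∘ ξ̄ ∘ (⋆)` equals the map induced by `μ_{ξ^{-1}}`. -/
theorem sigma_c_conjugates_mu_xi
    {k : Type*} [Field k] (hch : (2 : k) ≠ 0)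
    (σ : k ≃+* k) (hσ : ∀ x, σ (σ x) = x)
    (N : ℕ) (hN : 0 < N) (hNk : (N : k) ≠ 0)
    (β γ : k) (hβ : β ≠ 0) (hγ0 : γ ≠ 0) (hγσ : σ γ = γ)
    (hγ : γ ^ N = β * σ β)
    (u : k) (hu : u ^ N = 1) (huσ : σ u = u) (hu0 : u ≠ 0)
    (φ μ μ' : AdjoinRoot (X ^ N - C β) ≃+* AdjoinRoot (X ^ N - C β))
    (hφk : ∀ x : k, φ (algebraMap k (AdjoinRoot (X ^ N - C β)) x) =
      algebraMap k (AdjoinRoot (X ^ N - C β)) (σ x))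
    (hφb : φ (AdjoinRoot.root (X ^ N - C β)) * AdjoinRoot.root (X ^ N - C β) =
      algebraMap k (AdjoinRoot (X ^ N - C β)) γ)
    (hμk : ∀ x : k, μ (algebraMap k (AdjoinRoot (X ^ N - C β)) x) =
      algebraMap k (AdjoinRoot (X ^ N - C β)) x)
    (hμb : μ (AdjoinRoot.root (X ^ N - C β)) =
      algebraMap k (AdjoinRoot (X ^ N - C β)) u * AdjoinRoot.root (X ^ N - C β))
    (hμ'k : ∀ x : k, μ' (algebraMap k (AdjoinRoot (X ^ N - C β)) x) =
      algebraMap k (AdjoinRoot (X ^ N - C β)) x)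
    (hμ'b : μ' (AdjoinRoot.root (X ^ N - C β)) =
      algebraMap k (AdjoinRoot (X ^ N - C β)) u⁻¹ * AdjoinRoot.root (X ^ N - C β)) :
    (∀ y, φ (μ (φ y)) = μ' y) ∧
    ∀ p : PrimeSpectrum (AdjoinRoot (X ^ N - C β)),
      PrimeSpectrum.comap φ.toRingHom
          (PrimeSpectrum.comap μ.toRingHom (PrimeSpectrum.comap φ.toRingHom p)) =
        PrimeSpectrum.comap μ'.toRingHom p := by
  set A := AdjoinRoot (X ^ N - C β)
  set a : k →+* A := algebraMap k A with ha
  set r : A := AdjoinRoot.root (X ^ N - C β) with hr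
  -- γ is invertible in A
  have hγinv : a γ * a γ⁻¹ = 1 := by
    rw [← map_mul, mul_inv_cancel₀ hγ0, map_one]
  have huinv : a u * a u⁻¹ = 1 := by
    rw [← map_mul, mul_inv_cancel₀ hu0, map_one]
  -- key computation on the root
  have e1 : μ (φ r) * (a u * r) = a γ := by
    have := congrArg μ hφb
    rwa [map_mul, hμb, hμk] at this
  have e2 : φ (μ (φ r)) * (a u * φ r) = a γ := by
    have := congrArg φ e1
    rwa [map_mul, map_mul, hφk, huσ, hφk, hγσ] at this
  have e3 : φ (μ (φ r)) * (a u * a γ) = a γ * r := by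
    have := congrArg (· * r) e2
    calc φ (μ (φ r)) * (a u * a γ) = φ (μ (φ r)) * (a u * (φ r * r)) := by rw [hφb]
      _ = φ (μ (φ r)) * (a u * φ r) * r := by ring
      _ = a γ * r := by rw [e2]
  have key : φ (μ (φ r)) = a u⁻¹ * r := by
    have := congrArg (· * (a γ⁻¹ * a u⁻¹)) e3
    calc φ (μ (φ r)) = φ (μ (φ r)) * ((a u * a u⁻¹) * (a γ * a γ⁻¹)) := by
          rw [huinv, hγinv, one_mul, mul_one]
      _ = φ (μ (φ r)) * (a u * a γ) * (a γ⁻¹ * a u⁻¹) := by ring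
      _ = a γ * r * (a γ⁻¹ * a u⁻¹) := by rw [e3]
      _ = a u⁻¹ * r * (a γ * a γ⁻¹) := by ring
      _ = a u⁻¹ * r := by rw [hγinv, mul_one]
  have hmain : ∀ y, φ (μ (φ y)) = μ' y := by
    intro y
    induction y using AdjoinRoot.induction_on with
    | ih p =>
      induction p using Polynomial.induction_on with
      | C x =>
        rw [AdjoinRoot.mk_C, ← AdjoinRoot.algebraMap_eq, hφk, hμk, hφk, hσ, hμ'k]
      | add p q hp hq =>
        simp only [map_add, hp, hq]
      | monomial n x h =>
        have hx : (AdjoinRoot.mk (X ^ N - C β)) (C x) = a x := by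
          rw [AdjoinRoot.mk_C, ← AdjoinRoot.algebraMap_eq]
        have hX : (AdjoinRoot.mk (X ^ N - C β)) X = r := rfl
        simp only [map_mul, map_pow, hx, hX, hφk, hμk, hσ, hμ'k, key, hμ'b]
  refine ⟨hmain, fun p => ?_⟩
  have hcomp : φ.toRingHom.comp (μ.toRingHom.comp φ.toRingHom) = μ'.toRingHom :=
    RingHom.ext hmain
  rw [← PrimeSpectrum.comap_comp_apply, ← PrimeSpectrum.comap_comp_apply, hcomp]
end

section
/- If i = i^⋆ and nonzero admissible pairings on S_i exist, then either there exists a perfect Hermitian admissible pairing on S_i (⟨v,u⟩ = σ⟨u,v⟩), or every admissible pairing on S_i is skew-Hermitian. -/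
/-- A pairing `B : S × S → F` is *admissible* (w.r.t. `ζ, σ, c` and the semilinear
operator `θS`) if it is `F`-linear in the first variable, `(F,σ)`-semilinear in the second,
and satisfies `B(θ u, θ v) = c·ζ(B(u,v))`. -/
def IsAdmissiblePairing {F S : Type*} [Field F] [AddCommGroup S] [Module F S]
    (ζ σ : F → F) (c : F) (θS : S → S) (B : S → S → F) : Prop :=
  (∀ u u' v, B (u + u') v = B u v + B u' v) ∧
  (∀ (a : F) (u v), B (a • u) v = a * B u v) ∧
  (∀ u v v', B u (v + v') = B u v + B u v') ∧
  (∀ (a : F) (u v), B u (a • v) = σ a * B u v) ∧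
  (∀ u v, B (θS u) (θS v) = c * ζ (B u v))

/-- Let `S` be a simple `A_β`-module with `i = i^⋆`, i.e. nonzero
admissible pairings on `S` exist.  Then either there exists a perfect Hermitian admissible
pairing on `S`, or every admissible pairing on `S` is skew-Hermitian. -/
theorem hermitian_or_all_skew
    {k F S : Type*} [Field k] [Field F] [Algebra k F]
    [FiniteDimensional k F] [IsGalois k F]
    (hch : (2 : k) ≠ 0)
    (ζ : F ≃ₐ[k] F) (n m : ℕ) (hn : 0 < n) (hord : orderOf ζ = n)
    (hgen : ∀ g : F ≃ₐ[k] F, g ∈ Subgroup.zpowers ζ)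
    (hnm : n ∣ m)
    (β : k) (hβ : β ≠ 0)
    (σ : F ≃+* F) (hσinv : ∀ a, σ (σ a) = a) (hσζ : ∀ a, σ (ζ a) = ζ (σ a))
    (c : F) (hc : c ≠ 0) (hcσ : σ c = c)
    [AddCommGroup S] [Module F S] [FiniteDimensional F S] [Nontrivial S]
    (θS : S → S)
    (haddS : ∀ u v, θS (u + v) = θS u + θS v)
    (hsemiS : ∀ (a : F) (u : S), θS (a • u) = ζ a • θS u)
    (hbijS : Function.Bijective θS)
    (hθSm : ∀ u, θS^[m] u = algebraMap k F β • u)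
    (hsimpS : ∀ W : Submodule F S, (∀ w ∈ W, θS w ∈ W) → W = ⊥ ∨ W = ⊤)
    (hex : ∃ B : S → S → F, IsAdmissiblePairing (⇑ζ) (⇑σ) c θS B ∧ B ≠ 0) :
    (∃ B : S → S → F, IsAdmissiblePairing (⇑ζ) (⇑σ) c θS B ∧
      (∀ u, (∀ v, B u v = 0) → u = 0) ∧ (∀ v, (∀ u, B u v = 0) → v = 0) ∧
      (∀ u v, B v u = σ (B u v))) ∨
    (∀ B : S → S → F, IsAdmissiblePairing (⇑ζ) (⇑σ) c θS B →
      ∀ u v, B v u = - σ (B u v)) := by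
  have nondeg : ∀ B : S → S → F, IsAdmissiblePairing (⇑ζ) (⇑σ) c θS B → B ≠ 0 →
      (∀ u, (∀ v, B u v = 0) → u = 0) ∧ (∀ v, (∀ u, B u v = 0) → v = 0) := by
    intro B hB hne
    obtain ⟨h1, h2, h3, h4, h5⟩ := hB
    have hBz : ∀ v, B 0 v = 0 := fun v => by simpa using h2 0 0 v
    have hBz' : ∀ u, B u 0 = 0 := fun u => by simpa using h4 0 u 0
    constructor
    · intro u hu
      let W : Submodule F S :=
        { carrier := {u | ∀ v, B u v = 0}
          add_mem' := fun {a b} ha hb v => by rw [h1, ha v, hb v, add_zero]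
          zero_mem' := hBz
          smul_mem' := fun a u hu v => by rw [h2, hu v, mul_zero] }
      have hst : ∀ w ∈ W, θS w ∈ W := by
        intro w hw v
        obtain ⟨v', rfl⟩ := hbijS.2 v
        rw [h5, hw v', map_zero, mul_zero]
      rcases hsimpS W hst with hbot | htop
      · have hm : u ∈ W := hu
        rwa [hbot, Submodule.mem_bot] at hm
      · exact absurd (funext fun x => funext fun y =>
          (show x ∈ W by rw [htop]; trivial) y) hne
    · intro v hv
      let W : Submodule F S :=
        { carrier := {v | ∀ u, B u v = 0}
          add_mem' := fun {a b} ha hb u => by rw [h3, ha u, hb u, add_zero]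
          zero_mem' := hBz'
          smul_mem' := fun a v hv u => by rw [h4, hv u, mul_zero] }
      have hst : ∀ w ∈ W, θS w ∈ W := by
        intro w hw u
        obtain ⟨u', rfl⟩ := hbijS.2 u
        rw [h5, hw u', map_zero, mul_zero]
      rcases hsimpS W hst with hbot | htop
      · have hm : v ∈ W := hv
        rwa [hbot, Submodule.mem_bot] at hm
      · exact absurd (funext fun x => funext fun y =>
          (show y ∈ W by rw [htop]; trivial) x) hne
  by_cases hall : ∀ B : S → S → F, IsAdmissiblePairing (⇑ζ) (⇑σ) c θS B →
      ∀ u v, B u v + σ (B v u) = 0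
  · right
    intro B hB u v
    have h := hall B hB u v
    have h2 : σ (B v u) = -(B u v) := by linear_combination h
    calc B v u = σ (σ (B v u)) := (hσinv _).symm
    _ = σ (-(B u v)) := by rw [h2]
    _ = - σ (B u v) := map_neg σ _
  · left
    push_neg at hall
    obtain ⟨B, hB, u0, v0, hne0⟩ := hall
    obtain ⟨h1, h2, h3, h4, h5⟩ := hB
    set H : S → S → F := fun u v => B u v + σ (B v u) with hH
    have hadm : IsAdmissiblePairing (⇑ζ) (⇑σ) c θS H := by
      refine ⟨fun u u' v => ?_, fun a u v => ?_, fun u v v' => ?_, fun a u v => ?_,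
        fun u v => ?_⟩
      · simp only [hH, h1, h3, map_add]; ring
      · simp only [hH, h2, h4, map_mul, hσinv]; ring
      · simp only [hH, h1, h3, map_add]; ring
      · simp only [hH, h2, h4, map_mul, hσinv]; ring
      · simp only [hH, h5, map_mul, hcσ, hσζ, map_add]; ring
    have hHne : H ≠ 0 := fun h => hne0 (by
      have := congrFun (congrFun h u0) v0
      simpa [hH] using this)
    obtain ⟨hl, hr⟩ := nondeg H hadm hHne
    refine ⟨H, hadm, hl, hr, fun u v => ?_⟩
    simp only [hH, map_add, hσinv]
    ring
end

section
/- Given a perfect admissible pairing ⟨·,·⟩_i: S_i × S_{i^⋆} → F, the map δ_i: D_i → D_{i^⋆} characterized by ⟨ud, v⟩_i = ⟨u, v·δ_i(d)⟩_i for all u ∈ S_i, v ∈ S_{i^⋆}, is a well-defined (k,σ)-semilinear isomorphism of algebras D_i → D_{i^⋆}^{opp}, and it restricts to σ_c: L_i → L_{i^⋆} on the centers. -/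
/-- A pairing `B : S × S' → F` is *admissible* if it is `F`-linear in the first variable,
`(F,σ)`-semilinear in the second, and satisfies `B(θ u, θ' v) = c·ζ(B(u,v))`. -/
def IsAdmissiblePairing₂ {F S S' : Type*} [Field F]
    [AddCommGroup S] [Module F S] [AddCommGroup S'] [Module F S']
    (ζ σ : F → F) (c : F) (θS : S → S) (θS' : S' → S') (B : S → S' → F) : Prop :=
  (∀ u u' v, B (u + u') v = B u v + B u' v) ∧
  (∀ (a : F) (u v), B (a • u) v = a * B u v) ∧
  (∀ u v v', B u (v + v') = B u v + B u v') ∧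
  (∀ (a : F) (u v), B u (a • v) = σ a * B u v) ∧
  (∀ u v, B (θS u) (θS' v) = c * ζ (B u v))

/-- Let `S = S_i`, `S' = S_{i^⋆}` be simple `A_β`-modules with a perfect
admissible pairing `B = ⟨·,·⟩_i`.  For every `d ∈ D_i` (an `F`-linear endomorphism of `S`
commuting with `θS`) there is a unique `d' = δ_i(d) ∈ D_{i^⋆}` with
`⟨u·d, v⟩ = ⟨u, v·δ_i(d)⟩`; and given the map `δ` with this defining property, `δ` is
additive, `(k,σ)`-semilinear, reverses multiplication (an isomorphism onto
`D_{i^⋆}^{opp}`, in particular a bijection between the commutants), and restricts to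
`σ_c : L_i → L_{i^⋆}` on the centers: `δ(θ^n|_S) ∘ (θ^n|_{S'}) = Nm_{F/k}(c)·id`. -/
theorem delta_i_properties
    {k F S S' : Type*} [Field k] [Field F] [Algebra k F]
    [FiniteDimensional k F] [IsGalois k F]
    (hch : (2 : k) ≠ 0)
    (ζ : F ≃ₐ[k] F) (n m : ℕ) (hn : 0 < n) (hord : orderOf ζ = n)
    (hgen : ∀ g : F ≃ₐ[k] F, g ∈ Subgroup.zpowers ζ)
    (hnm : n ∣ m)
    (β : k) (hβ : β ≠ 0)
    (σ : F ≃+* F) (hσinv : ∀ a, σ (σ a) = a) (hσζ : ∀ a, σ (ζ a) = ζ (σ a))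
    (c : F) (hc : c ≠ 0) (hcσ : σ c = c)
    [AddCommGroup S] [Module F S] [FiniteDimensional F S] [Nontrivial S]
    [AddCommGroup S'] [Module F S'] [FiniteDimensional F S'] [Nontrivial S']
    (θS : S → S) (θS' : S' → S')
    (haddS : ∀ u v, θS (u + v) = θS u + θS v)
    (hsemiS : ∀ (a : F) (u : S), θS (a • u) = ζ a • θS u)
    (hbijS : Function.Bijective θS)
    (hθSm : ∀ u, θS^[m] u = algebraMap k F β • u)
    (hsimpS : ∀ W : Submodule F S, (∀ w ∈ W, θS w ∈ W) → W = ⊥ ∨ W = ⊤)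
    (haddS' : ∀ u v, θS' (u + v) = θS' u + θS' v)
    (hsemiS' : ∀ (a : F) (u : S'), θS' (a • u) = ζ a • θS' u)
    (hbijS' : Function.Bijective θS')
    (hθS'm : ∀ u, θS'^[m] u = algebraMap k F β • u)
    (hsimpS' : ∀ W : Submodule F S', (∀ w ∈ W, θS' w ∈ W) → W = ⊥ ∨ W = ⊤)
    (B : S → S' → F)
    (hB : IsAdmissiblePairing₂ (⇑ζ) (⇑σ) c θS θS' B)
    (hBl : ∀ u, (∀ v, B u v = 0) → u = 0)
    (hBr : ∀ v, (∀ u, B u v = 0) → v = 0)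
    (δ : (S →ₗ[F] S) → (S' →ₗ[F] S'))
    (hδcomm : ∀ d : S →ₗ[F] S, (∀ s, d (θS s) = θS (d s)) →
      ∀ s, δ d (θS' s) = θS' (δ d s))
    (hδ : ∀ d : S →ₗ[F] S, (∀ s, d (θS s) = θS (d s)) →
      ∀ u v, B (d u) v = B u (δ d v))
    (Tn : S →ₗ[F] S) (hTn : ∀ s, Tn s = θS^[n] s)
    (Tn' : S' →ₗ[F] S') (hTn' : ∀ s, Tn' s = θS'^[n] s) :
    (∀ d : S →ₗ[F] S, (∀ s, d (θS s) = θS (d s)) →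
      ∃! d' : S' →ₗ[F] S',
        (∀ s, d' (θS' s) = θS' (d' s)) ∧ ∀ u v, B (d u) v = B u (d' v)) ∧
    (∀ d e : S →ₗ[F] S, (∀ s, d (θS s) = θS (d s)) → (∀ s, e (θS s) = θS (e s)) →
      δ (d + e) = δ d + δ e) ∧
    (∀ d e : S →ₗ[F] S, (∀ s, d (θS s) = θS (d s)) → (∀ s, e (θS s) = θS (e s)) →
      δ (d ∘ₗ e) = δ e ∘ₗ δ d) ∧
    (∀ (x : k) (d : S →ₗ[F] S), (∀ s, d (θS s) = θS (d s)) →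
      δ (algebraMap k F x • d) = σ (algebraMap k F x) • δ d) ∧
    (∀ d e : S →ₗ[F] S, (∀ s, d (θS s) = θS (d s)) → (∀ s, e (θS s) = θS (e s)) →
      δ d = δ e → d = e) ∧
    (∀ d' : S' →ₗ[F] S', (∀ s, d' (θS' s) = θS' (d' s)) →
      ∃ d : S →ₗ[F] S, (∀ s, d (θS s) = θS (d s)) ∧ δ d = d') ∧
    (δ Tn ∘ₗ Tn' = algebraMap k F (Algebra.norm k c) • (LinearMap.id : S' →ₗ[F] S')) := by
  classical
  obtain ⟨hBaddl, hBsmull, hBaddr, hBsmulr, hBθ⟩ := hB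
  have hσinj : Function.Injective σ := σ.injective
  -- basic facts
  have hB0l : ∀ v, B 0 v = 0 := by
    intro v
    have := hBsmull 0 (0 : S) v
    simpa using this
  have hB0r : ∀ u, B u 0 = 0 := by
    intro u
    have := hBsmulr 0 u (0 : S')
    simpa using this
  have hBnegl : ∀ w v, B (-w) v = - B w v := by
    intro w v
    have h := hBaddl w (-w) v
    rw [add_neg_cancel, hB0l] at h
    exact eq_neg_of_add_eq_zero_right h.symm
  have hBnegr : ∀ u w, B u (-w) = - B u w := by
    intro u w
    have h := hBaddr u w (-w)
    rw [add_neg_cancel, hB0r] at h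
    exact eq_neg_of_add_eq_zero_right h.symm
  have keyL : ∀ w w' : S, (∀ v, B w v = B w' v) → w = w' := by
    intro w w' h
    have h0 : ∀ v, B (w - w') v = 0 := by
      intro v
      rw [sub_eq_add_neg, hBaddl, hBnegl, h v, add_neg_cancel]
    exact sub_eq_zero.mp (hBl _ h0)
  have keyR : ∀ w w' : S', (∀ u, B u w = B u w') → w = w' := by
    intro w w' h
    have h0 : ∀ u, B u (w - w') = 0 := by
      intro u
      rw [sub_eq_add_neg, hBaddr, hBnegr, h u, add_neg_cancel]
    exact sub_eq_zero.mp (hBr _ h0)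
  -- uniqueness of the adjoint
  have hδeq : ∀ d : S →ₗ[F] S, (∀ s, d (θS s) = θS (d s)) →
      ∀ d' : S' →ₗ[F] S', (∀ u v, B (d u) v = B u (d' v)) → d' = δ d := by
    intro d hd d' hd'
    refine LinearMap.ext fun v => keyR _ _ fun u => ?_
    rw [← hd' u v, hδ d hd u v]
  refine ⟨?_, ?_, ?_, ?_, ?_, ?_, ?_⟩
  · -- existence and uniqueness
    intro d hd
    exact ⟨δ d, ⟨hδcomm d hd, hδ d hd⟩, fun d' hd' => hδeq d hd d' hd'.2⟩
  · -- additivity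
    intro d e hd he
    have hcomm : ∀ s, (d + e) (θS s) = θS ((d + e) s) := by
      intro s
      simp only [LinearMap.add_apply, hd, he, haddS]
    refine (hδeq (d + e) hcomm (δ d + δ e) fun u v => ?_).symm
    simp only [LinearMap.add_apply, hBaddl, hBaddr, hδ d hd, hδ e he]
  · -- anti-multiplicativity
    intro d e hd he
    have hcomm : ∀ s, (d ∘ₗ e) (θS s) = θS ((d ∘ₗ e) s) := by
      intro s
      simp only [LinearMap.comp_apply, hd, he]
    refine (hδeq (d ∘ₗ e) hcomm (δ e ∘ₗ δ d) fun u v => ?_).symm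
    simp only [LinearMap.comp_apply]
    rw [hδ d hd, hδ e he]
  · -- semilinearity
    intro x d hd
    set a := algebraMap k F x with ha
    have hζa : ζ a = a := ζ.commutes x
    have hcomm : ∀ s, (a • d) (θS s) = θS ((a • d) s) := by
      intro s
      simp only [LinearMap.smul_apply, hd, hsemiS, hζa]
    refine (hδeq (a • d) hcomm (σ a • δ d) fun u v => ?_).symm
    simp only [LinearMap.smul_apply]
    rw [hBsmull, hBsmulr, hσinv, hδ d hd]
  · -- injectivity
    intro d e hd he h
    refine LinearMap.ext fun u => keyL _ _ fun v => ?_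
    rw [hδ d hd u v, hδ e he u v, h]
  · -- surjectivity
    intro d' hd'
    -- the semilinear "musical" map
    set Ψ : S → Module.Dual F S' := fun u =>
      { toFun := fun v => σ (B u v)
        map_add' := fun v v' => by simp only [hBaddr, map_add]
        map_smul' := fun a v => by
          simp only [hBsmulr, map_mul, hσinv, smul_eq_mul, RingHom.id_apply] } with hΨ
    have hΨapp : ∀ u v, Ψ u v = σ (B u v) := fun u v => rfl
    have hrange : ∀ f : Module.Dual F S', ∃ u, Ψ u = f := by
      set W : Submodule F (Module.Dual F S') :=
        { carrier := Set.range Ψ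
          add_mem' := by
            rintro f g ⟨u, rfl⟩ ⟨u', rfl⟩
            refine ⟨u + u', LinearMap.ext fun v => ?_⟩
            simp only [hΨapp, hBaddl, map_add, LinearMap.add_apply]
          zero_mem' := ⟨0, LinearMap.ext fun v => by
            simp only [hΨapp, hB0l, map_zero, LinearMap.zero_apply]⟩
          smul_mem' := by
            rintro a f ⟨u, rfl⟩
            refine ⟨σ a • u, LinearMap.ext fun v => ?_⟩
            simp only [hΨapp, hBsmull, map_mul, hσinv, LinearMap.smul_apply, smul_eq_mul] } with hW
      have hco : W.dualCoannihilator = ⊥ := by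
        rw [Submodule.eq_bot_iff]
        intro v hv
        rw [Submodule.mem_dualCoannihilator] at hv
        refine hBr v fun u => ?_
        have h0 := hv (Ψ u) ⟨u, rfl⟩
        rw [hΨapp] at h0
        exact hσinj (by rw [h0, map_zero])
      have htop : W = ⊤ := by
        have hfin := Subspace.finrank_add_finrank_dualCoannihilator_eq W
        rw [hco, finrank_bot, add_zero] at hfin
        exact Submodule.eq_top_of_finrank_eq (by rw [hfin, Subspace.dual_finrank_eq])
      intro f
      have : f ∈ W := htop ▸ Submodule.mem_top
      exact this
    -- the candidate adjoint functional
    set g : S → Module.Dual F S' := fun u =>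
      { toFun := fun v => σ (B u (d' v))
        map_add' := fun v v' => by simp only [map_add, hBaddr]
        map_smul' := fun a v => by
          simp only [map_smul, hBsmulr, map_mul, hσinv, smul_eq_mul, RingHom.id_apply] } with hg
    set d0 : S → S := fun u => Classical.choose (hrange (g u)) with hd0def
    have hd0 : ∀ u v, B (d0 u) v = B u (d' v) := by
      intro u v
      have hs := Classical.choose_spec (hrange (g u))
      have := congrArg (fun f : Module.Dual F S' => f v) hs
      simp only [hΨapp] at this
      exact hσinj this
    have hadd : ∀ u u', d0 (u + u') = d0 u + d0 u' := by
      intro u u'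
      refine keyL _ _ fun v => ?_
      rw [hd0, hBaddl, hBaddl, hd0, hd0]
    have hsmul : ∀ (a : F) u, d0 (a • u) = a • d0 u := by
      intro a u
      refine keyL _ _ fun v => ?_
      rw [hd0, hBsmull, hBsmull, hd0]
    set d : S →ₗ[F] S :=
      { toFun := d0
        map_add' := hadd
        map_smul' := hsmul } with hd
    have hdapp : ∀ u, d u = d0 u := fun u => rfl
    have hcomm : ∀ s, d (θS s) = θS (d s) := by
      intro s
      refine keyL _ _ fun v => ?_
      obtain ⟨w, rfl⟩ := hbijS'.2 v
      rw [hdapp, hdapp, hd0, hd' w, hBθ, hBθ, hd0]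
    refine ⟨d, hcomm, ?_⟩
    refine LinearMap.ext fun v => keyR _ _ fun u => ?_
    rw [← hδ d hcomm u v, hdapp, hd0]
  · -- the norm identity
    have hcommTn : ∀ s, Tn (θS s) = θS (Tn s) := by
      intro s
      rw [hTn, hTn, ← Function.iterate_succ_apply, Function.iterate_succ_apply']
    have hiter : ∀ (j : ℕ) (u : S) (v : S'),
        B (θS^[j] u) (θS'^[j] v) =
          (∏ i ∈ Finset.range j, (ζ ^ i : F ≃ₐ[k] F) c) * ((ζ ^ j : F ≃ₐ[k] F) (B u v)) := by
      intro j
      induction j with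
      | zero => intro u v; simp
      | succ j ih =>
        intro u v
        rw [Function.iterate_succ_apply', Function.iterate_succ_apply', hBθ, ih, map_mul,
          Finset.prod_range_succ']
        rw [map_prod]
        have h1 : ∀ i : ℕ, ζ ((ζ ^ i : F ≃ₐ[k] F) c) = (ζ ^ (i + 1) : F ≃ₐ[k] F) c := by
          intro i
          rw [pow_succ']
          rfl
        have h2 : ζ ((ζ ^ j : F ≃ₐ[k] F) (B u v)) = (ζ ^ (j + 1) : F ≃ₐ[k] F) (B u v) := by
          rw [pow_succ']
          rfl
        simp only [h1, h2, pow_zero, AlgEquiv.one_apply]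
        ring
    have hσpow : ∀ (i : ℕ) (a : F), σ ((ζ ^ i : F ≃ₐ[k] F) a) = (ζ ^ i : F ≃ₐ[k] F) (σ a) := by
      intro i
      induction i with
      | zero => intro a; simp
      | succ i ih =>
        intro a
        have h1 : ∀ b, (ζ ^ (i + 1) : F ≃ₐ[k] F) b = ζ ((ζ ^ i : F ≃ₐ[k] F) b) := by
          intro b; rw [pow_succ']; rfl
        rw [h1, h1, hσζ, ih]
    have hNorm : algebraMap k F (Algebra.norm k c)
        = ∏ i ∈ Finset.range n, (ζ ^ i : F ≃ₐ[k] F) c := by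
      rw [Algebra.norm_eq_prod_automorphisms]
      refine (Finset.prod_bij (fun (i : ℕ) (_ : i ∈ Finset.range n) => (ζ ^ i : F ≃ₐ[k] F))
        (fun i _ => Finset.mem_univ _) ?_ ?_ (fun i _ => rfl)).symm
      · intro i hi j hj hij
        rw [Finset.mem_range] at hi hj
        exact pow_injOn_Iio_orderOf (by rwa [Set.mem_Iio, hord]) (by rwa [Set.mem_Iio, hord]) hij
      · intro gg _
        obtain ⟨z, hz⟩ := hgen gg
        refine ⟨(z % (n : ℤ)).toNat, Finset.mem_range.mpr ?_, ?_⟩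
        · have h1 : z % (n : ℤ) < n := Int.emod_lt_of_pos z (by exact_mod_cast hn)
          omega
        · have h0 : (0 : ℤ) ≤ z % (n : ℤ) := Int.emod_nonneg z (by exact_mod_cast hn.ne')
          calc ζ ^ ((z % (n : ℤ)).toNat)
              = ζ ^ (((z % (n : ℤ)).toNat : ℤ)) := (zpow_natCast _ _).symm
            _ = ζ ^ (z % ((orderOf ζ : ℕ) : ℤ)) := by rw [Int.toNat_of_nonneg h0, hord]
            _ = ζ ^ z := zpow_mod_orderOf ζ z
            _ = gg := hz
    have hζn : (ζ ^ n : F ≃ₐ[k] F) = 1 := by rw [← hord, pow_orderOf_eq_one]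
    have hσN : σ (∏ i ∈ Finset.range n, (ζ ^ i : F ≃ₐ[k] F) c)
        = ∏ i ∈ Finset.range n, (ζ ^ i : F ≃ₐ[k] F) c := by
      rw [map_prod]
      exact Finset.prod_congr rfl fun i _ => by rw [hσpow, hcσ]
    refine LinearMap.ext fun v => keyR _ _ fun u => ?_
    have hL : B u ((δ Tn ∘ₗ Tn') v) =
        (∏ i ∈ Finset.range n, (ζ ^ i : F ≃ₐ[k] F) c) * B u v := by
      rw [LinearMap.comp_apply, ← hδ Tn hcommTn, hTn, hTn', hiter, hζn]
      simp
    have hR : B u ((algebraMap k F (Algebra.norm k c) • (LinearMap.id : S' →ₗ[F] S')) v) =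
        (∏ i ∈ Finset.range n, (ζ ^ i : F ≃ₐ[k] F) c) * B u v := by
      rw [LinearMap.smul_apply, LinearMap.id_apply, hBsmulr, hNorm, hσN]
    rw [hL, hR]
end
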